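/- arXiv:1706.00953 — 3 statements merged into one kernel-verified Lean document; each statement's English description precedes it below -/
import Mathlib

section
/- If there exists a positive integer i₀ such that Σ_{k≥1} p_k({i₀}) = +∞, then the probability measure μ_ξ (the distribution of the random variable with independent symbols of the difference Silvester expansion, with laws p_k) is singular with respect to Lebesgue measure: μ_ξ ⊥ λ. -/
open MeasureTheory Set

namespace ROE

/-- The `x`-sequence of the restricted Oppenheim algorithm applied to `x`:
index `k` corresponds to the paper's `x_{k+1}`, and `a k`, `b k` correspond to the paper's
`a_{k+1}`, `b_{k+1}`.  So `X a b x 0 = x₁ = x` and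
`x_{k+2} = (b_{k+1}(d_{k+1})/a_{k+1}(d_{k+1})) · (x_{k+1} - 1/d_{k+1})`. -/
noncomputable def X (a b : ℕ → ℕ → ℕ) (x : ℝ) : ℕ → ℝ
  | 0 => x
  | k + 1 =>
      let xk := X a b x k
      let d : ℕ := (⌊1 / xk⌋).toNat + 1
      ((b k d : ℝ) / (a k d : ℝ)) * (xk - 1 / (d : ℝ))

/-- The digit `d_{k+1}(x) = ⌊1/x_{k+1}⌋ + 1` of the restricted Oppenheim expansion. -/
noncomputable def D (a b : ℕ → ℕ → ℕ) (x : ℝ) (k : ℕ) : ℕ :=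
  (⌊1 / X a b x k⌋).toNat + 1

/-- The restricted Oppenheim expansion of `x` is infinite: all `x_n` lie in `(0,1)`. -/
def InfiniteROE (a b : ℕ → ℕ → ℕ) (x : ℝ) : Prop :=
  ∀ k, X a b x k ∈ Set.Ioo (0 : ℝ) 1

/-- The finite sequence `(j 0, …, j (n-1))` (the paper's `(j_1, …, j_n)`) is admissible:
`j_1 ≥ 2` and `j_{i+1} > h_i(j_i)`.  Here `h i` corresponds to the paper's `h_{i+1}`. -/
def Admissible (h : ℕ → ℕ → ℕ) (n : ℕ) (j : ℕ → ℕ) : Prop :=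
  2 ≤ j 0 ∧ ∀ i, i + 1 < n → h i (j i) < j (i + 1)

/-- The cylinder of rank `n` with base `(j 0, …, j (n-1))`: the set of `x ∈ (0,1)` with
infinite ROE whose first `n` digits are `j 0, …, j (n-1)`. -/
def cylinder (a b : ℕ → ℕ → ℕ) (n : ℕ) (j : ℕ → ℕ) : Set ℝ :=
  {x | x ∈ Set.Ioo (0 : ℝ) 1 ∧ InfiniteROE a b x ∧ ∀ i < n, D a b x i = j i}

/-- The difference-ROE digit `α_{k+1}(x)`: `α₁ = d₁ - 1`, `α_{k+2} = d_{k+2} - h_{k+1}(d_{k+1})`. -/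
noncomputable def alpha (a b h : ℕ → ℕ → ℕ) (x : ℝ) : ℕ → ℕ
  | 0 => D a b x 0 - 1
  | k + 1 => D a b x (k + 1) - h k (D a b x k)

/-- The digit sequence `d` reconstructed from a sequence `α` of difference-ROE symbols:
`d₁ = α₁ + 1`, `d_{k+2} = h_{k+1}(d_{k+1}) + α_{k+2}`. -/
def dSeq (h : ℕ → ℕ → ℕ) (α : ℕ → ℕ) : ℕ → ℕ
  | 0 => α 0 + 1
  | k + 1 => h k (dSeq h α k) + α (k + 1)

/-- The real number whose difference-ROE digits are `(α k)`:
`Φ(α) = Σ_{n≥1} (∏_{i=1}^{n-1} a_i(d_i)/b_i(d_i)) · (1/d_n)`. -/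
noncomputable def Phi (a b h : ℕ → ℕ → ℕ) (α : ℕ → ℕ) : ℝ :=
  ∑' n : ℕ, (∏ i ∈ Finset.range n, (a i (dSeq h α i) : ℝ) / (b i (dSeq h α i) : ℝ)) *
    (1 / (dSeq h α n : ℝ))

/-- The Silvester expansion is the ROE with `a_n ≡ 1` and `b_n ≡ 1`, for which
`h_n(j) = j(j-1)`;  `Φ_S(α) = Σ_{n≥1} 1/d_n` where `d₁ = α₁ + 1` and
`d_{k+1} = d_k(d_k - 1) + α_{k+1}`. -/
def silvesterA : ℕ → ℕ → ℕ := fun _ _ => 1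

def silvesterB : ℕ → ℕ → ℕ := fun _ _ => 1

def silvesterH : ℕ → ℕ → ℕ := fun _ j => j * (j - 1)

noncomputable def PhiS : (ℕ → ℕ) → ℝ := Phi silvesterA silvesterB silvesterH

open Filter ProbabilityTheory
open scoped Pointwise

/-! Write `t_m = ∑_{k ≥ m} 1/d_k` for the tails of `Φ_S(α)`. Since `d_{m+1} - 1 ≥ d_m (d_m - 1)`,
the tails satisfy `1/d_m ≤ t_m ≤ 1/(d_m - 1)`. Hence if `α_n = i₀`, then `Φ_S(α)` lies in a
set `T_n` (`tailSet i₀ n 1`) built from translates of the intervals `[1/(h + i₀), 1/(h + i₀ - 1)]`,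
and a telescoping estimate gives `λ(T_n) ≤ (2/3)^n / 2`. By the second Borel–Cantelli lemma
`P`-almost every `α` has `α_n = i₀` infinitely often, so `μ_ξ` is carried by `limsup T_n`,
which is Lebesgue-null by the first Borel–Cantelli lemma. -/

section SilvesterTail

variable {α : ℕ → ℕ}

lemma dSeq_silvesterH_succ (k : ℕ) :
    dSeq silvesterH α (k + 1) = dSeq silvesterH α k * (dSeq silvesterH α k - 1) + α (k + 1) :=
  rfl

lemma two_le_dSeq_silvesterH (hα : 1 ≤ α 0) : ∀ k, 2 ≤ dSeq silvesterH α k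
  | 0 => by simp only [dSeq]; omega
  | k + 1 => by
    have hk := two_le_dSeq_silvesterH hα k
    have := Nat.mul_le_mul hk (show 1 ≤ dSeq silvesterH α k - 1 by omega)
    rw [dSeq_silvesterH_succ]
    omega

lemma mul_pred_le_dSeq_silvesterH_succ_sub_one (hα : ∀ k, 1 ≤ α k) (k : ℕ) :
    (dSeq silvesterH α k : ℝ) * (dSeq silvesterH α k - 1) ≤ dSeq silvesterH α (k + 1) - 1 := by
  have hd := two_le_dSeq_silvesterH (hα 0) k
  have ha : (1 : ℝ) ≤ α (k + 1) := by exact_mod_cast hα (k + 1)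
  rw [dSeq_silvesterH_succ]
  push_cast [Nat.cast_sub (show 1 ≤ dSeq silvesterH α k by omega)]
  linarith

lemma one_div_dSeq_silvesterH_le_sub (hα : ∀ k, 1 ≤ α k) (k : ℕ) :
    1 / (dSeq silvesterH α k : ℝ) ≤
      1 / ((dSeq silvesterH α k : ℝ) - 1) - 1 / ((dSeq silvesterH α (k + 1) : ℝ) - 1) := by
  have hd : (2 : ℝ) ≤ dSeq silvesterH α k := by exact_mod_cast two_le_dSeq_silvesterH (hα 0) k
  have hnext : 1 / ((dSeq silvesterH α (k + 1) : ℝ) - 1) ≤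
      1 / ((dSeq silvesterH α k : ℝ) * (dSeq silvesterH α k - 1)) :=
    one_div_le_one_div_of_le (by nlinarith) (mul_pred_le_dSeq_silvesterH_succ_sub_one hα k)
  have hsplit : 1 / ((dSeq silvesterH α k : ℝ) - 1) -
      1 / ((dSeq silvesterH α k : ℝ) * (dSeq silvesterH α k - 1)) = 1 / dSeq silvesterH α k := by
    field_simp [show (dSeq silvesterH α k : ℝ) - 1 ≠ 0 by linarith]
  linarith

lemma sum_range_one_div_dSeq_silvesterH_le (hα : ∀ k, 1 ≤ α k) (m N : ℕ) :
    ∑ k ∈ Finset.range N, 1 / (dSeq silvesterH α (m + k) : ℝ) ≤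
      1 / ((dSeq silvesterH α m : ℝ) - 1) := by
  have hN : (0 : ℝ) ≤ 1 / ((dSeq silvesterH α (m + N) : ℝ) - 1) := by
    have : (2 : ℝ) ≤ dSeq silvesterH α (m + N) := by
      exact_mod_cast two_le_dSeq_silvesterH (hα 0) (m + N)
    exact one_div_nonneg.2 (by linarith)
  calc ∑ k ∈ Finset.range N, 1 / (dSeq silvesterH α (m + k) : ℝ)
      ≤ ∑ k ∈ Finset.range N, (1 / ((dSeq silvesterH α (m + k) : ℝ) - 1) -
          1 / ((dSeq silvesterH α (m + (k + 1)) : ℝ) - 1)) :=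
        Finset.sum_le_sum fun k _ => one_div_dSeq_silvesterH_le_sub hα (m + k)
    _ ≤ 1 / ((dSeq silvesterH α m : ℝ) - 1) := by
        rw [Finset.sum_range_sub' (fun k => 1 / ((dSeq silvesterH α (m + k) : ℝ) - 1))]
        simpa using hN

noncomputable def silvesterTail (α : ℕ → ℕ) (m : ℕ) : ℝ :=
  ∑' k, 1 / (dSeq silvesterH α (m + k) : ℝ)

lemma summable_one_div_dSeq_silvesterH (hα : ∀ k, 1 ≤ α k) (m : ℕ) :
    Summable fun k => 1 / (dSeq silvesterH α (m + k) : ℝ) :=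
  summable_of_sum_range_le (fun _ => by positivity) (sum_range_one_div_dSeq_silvesterH_le hα m)

lemma silvesterTail_le (hα : ∀ k, 1 ≤ α k) (m : ℕ) :
    silvesterTail α m ≤ 1 / ((dSeq silvesterH α m : ℝ) - 1) :=
  Real.tsum_le_of_sum_range_le (fun _ => by positivity) (sum_range_one_div_dSeq_silvesterH_le hα m)

lemma one_div_dSeq_silvesterH_le_silvesterTail (hα : ∀ k, 1 ≤ α k) (m : ℕ) :
    1 / (dSeq silvesterH α m : ℝ) ≤ silvesterTail α m :=
  (summable_one_div_dSeq_silvesterH hα m).le_tsum 0 fun _ _ => by positivity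

lemma silvesterTail_eq_add (hα : ∀ k, 1 ≤ α k) (m : ℕ) :
    silvesterTail α m = 1 / (dSeq silvesterH α m : ℝ) + silvesterTail α (m + 1) := by
  rw [silvesterTail, (summable_one_div_dSeq_silvesterH hα m).tsum_eq_zero_add, silvesterTail]
  simp only [add_zero, add_assoc, add_comm 1]

lemma PhiS_eq_silvesterTail_zero : PhiS α = silvesterTail α 0 := by
  simp [PhiS, Phi, silvesterTail, silvesterA, silvesterB]

/-- `tailSet i₀ n h` contains the tail `t_m` of every positive symbol sequence with
`d_m = h + α_m` and `α_{m+n} = i₀`; the next value of `h` is `d_m (d_m - 1)`. -/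
def tailSet (i₀ : ℕ) : ℕ → ℕ → Set ℝ
  | 0, h => Icc (1 / ((h + i₀ : ℕ) : ℝ)) (1 / (((h + i₀ : ℕ) : ℝ) - 1))
  | n + 1, h => ⋃ j : ℕ, (1 / ((h + j + 1 : ℕ) : ℝ)) +ᵥ tailSet i₀ n ((h + j + 1) * (h + j))

lemma measurableSet_tailSet (i₀ : ℕ) : ∀ n h, MeasurableSet (tailSet i₀ n h)
  | 0, _ => measurableSet_Icc
  | n + 1, _ => MeasurableSet.iUnion fun _ => (measurableSet_tailSet i₀ n _).const_vadd _

lemma silvesterTail_mem_tailSet (hα : ∀ k, 1 ≤ α k) {i₀ : ℕ} :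
    ∀ n m h, dSeq silvesterH α m = h + α m → α (m + n) = i₀ →
      silvesterTail α m ∈ tailSet i₀ n h
  | 0, m, h, hd, hi => by
    rw [tailSet, ← hi, add_zero, ← hd]
    exact ⟨one_div_dSeq_silvesterH_le_silvesterTail hα m, silvesterTail_le hα m⟩
  | n + 1, m, h, hd, hi => by
    obtain ⟨j, hj⟩ : ∃ j, α m = j + 1 := ⟨α m - 1, by have := hα m; omega⟩
    have hdj : dSeq silvesterH α m = h + j + 1 := by omega
    have hnext : dSeq silvesterH α (m + 1) = (h + j + 1) * (h + j) + α (m + 1) := by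
      rw [dSeq_silvesterH_succ, hdj, Nat.add_sub_cancel]
    have htail : -(1 / ((h + j + 1 : ℕ) : ℝ)) + silvesterTail α m = silvesterTail α (m + 1) := by
      rw [silvesterTail_eq_add hα m, hdj, neg_add_cancel_left]
    refine mem_iUnion.2 ⟨j, ?_⟩
    rw [mem_vadd_set_iff_neg_vadd_mem, vadd_eq_add, htail]
    exact silvesterTail_mem_tailSet hα n (m + 1) _ hnext (by rwa [add_right_comm, add_assoc])

lemma PhiS_mem_tailSet (hα : ∀ k, 1 ≤ α k) {i₀ n : ℕ} (hn : α n = i₀) :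
    PhiS α ∈ tailSet i₀ n 1 := by
  rw [PhiS_eq_silvesterTail_zero]
  exact silvesterTail_mem_tailSet hα n 0 1 (by simp [dSeq, add_comm]) (by rwa [zero_add])

end SilvesterTail

lemma one_div_sub_one_sub_one_div_le {h r : ℝ} (hh : 1 ≤ h) (hr : h + 1 ≤ r) :
    1 / (r - 1) - 1 / r ≤ 1 / (h * (h + 1)) := by
  have hsub : 1 / (r - 1) - 1 / r = 1 / ((r - 1) * r) := by
    field_simp [show r - 1 ≠ 0 by linarith, show r ≠ 0 by linarith]
    ring
  rw [hsub]
  exact one_div_le_one_div_of_le (by positivity) (by nlinarith)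

lemma div_mul_add_one_le {c h x : ℝ} (hc : 0 ≤ c) (hh : 1 ≤ h) (hx : h ≤ x) :
    c / ((x + 1) * x * ((x + 1) * x + 1)) ≤ c / (h * (h + 1) + 1) * (1 / x - 1 / (x + 1)) := by
  have hsub : c / (h * (h + 1) + 1) * (1 / x - 1 / (x + 1)) =
      c / ((h * (h + 1) + 1) * ((x + 1) * x)) := by
    field_simp [show x ≠ 0 by linarith, show x + 1 ≠ 0 by linarith]
    ring
  have hx0 : 0 < (x + 1) * x := by nlinarith
  have hhx : h * (h + 1) ≤ (x + 1) * x := by nlinarith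
  rw [hsub]
  exact div_le_div_of_nonneg_left hc (by positivity) (by nlinarith)

lemma div_mul_one_div_le {c h : ℝ} (hc : 0 ≤ c) (hh : 1 ≤ h) :
    c / (h * (h + 1) + 1) * (1 / h) ≤ 2 / 3 * c / (h * (h + 1)) := by
  have key : 0 ≤ c * (h * ((2 * h + 1) * (h - 1))) :=
    mul_nonneg hc (mul_nonneg (by linarith) (mul_nonneg (by linarith) (by linarith)))
  rw [div_mul_div_comm, mul_one, div_le_div_iff₀ (by positivity) (by positivity)]
  nlinarith

lemma tsum_ofReal_sub_succ_le {u : ℕ → ℝ} (hu : Antitone u) (hu0 : ∀ n, 0 ≤ u n) :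
    ∑' n, ENNReal.ofReal (u n - u (n + 1)) ≤ ENNReal.ofReal (u 0) := by
  refine ENNReal.tsum_le_of_sum_range_le fun N => ?_
  rw [← ENNReal.ofReal_sum_of_nonneg fun n _ => sub_nonneg.2 (hu n.le_succ),
    Finset.sum_range_sub']
  exact ENNReal.ofReal_le_ofReal (by linarith [hu0 N])

lemma volume_tailSet_le {i₀ : ℕ} (hi₀ : 1 ≤ i₀) :
    ∀ n h, 1 ≤ h → volume (tailSet i₀ n h) ≤ ENNReal.ofReal ((2 / 3) ^ n / (h * (h + 1)))
  | 0, h, hh => by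
    have hh' : (1 : ℝ) ≤ h := by exact_mod_cast hh
    have hi₀' : (1 : ℝ) ≤ i₀ := by exact_mod_cast hi₀
    rw [tailSet, Real.volume_Icc, pow_zero]
    refine ENNReal.ofReal_le_ofReal ?_
    push_cast
    exact one_div_sub_one_sub_one_div_le hh' (by linarith)
  | n + 1, h, hh => by
    have hh' : (1 : ℝ) ≤ h := by exact_mod_cast hh
    set K : ℝ := (2 / 3) ^ n / (h * (h + 1) + 1)
    set u : ℕ → ℝ := fun j => 1 / ((h : ℝ) + j)
    have hu : Antitone u := fun a b hab => by
      have : (a : ℝ) ≤ b := by exact_mod_cast hab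
      exact one_div_le_one_div_of_le (by positivity) (by linarith)
    have hterm (j : ℕ) : volume (tailSet i₀ n ((h + j + 1) * (h + j))) ≤
        ENNReal.ofReal K * ENNReal.ofReal (u j - u (j + 1)) := by
      refine (volume_tailSet_le hi₀ n _ (Nat.one_le_iff_ne_zero.2 (by positivity))).trans ?_
      rw [← ENNReal.ofReal_mul (by positivity)]
      refine ENNReal.ofReal_le_ofReal ?_
      have := div_mul_add_one_le (c := (2 / 3 : ℝ) ^ n) (by positivity) hh'
        (x := h + j) (by linarith [j.cast_nonneg (α := ℝ)])
      simp only [u]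
      push_cast
      convert this using 4; ring
    calc volume (tailSet i₀ (n + 1) h)
        ≤ ∑' j : ℕ, volume (tailSet i₀ n ((h + j + 1) * (h + j))) := by
          rw [tailSet]
          exact (measure_iUnion_le _).trans (ENNReal.tsum_le_tsum fun j => (measure_vadd _ _ _).le)
      _ ≤ ∑' j : ℕ, ENNReal.ofReal K * ENNReal.ofReal (u j - u (j + 1)) :=
          ENNReal.tsum_le_tsum hterm
      _ ≤ ENNReal.ofReal K * ENNReal.ofReal (u 0) := by
          rw [ENNReal.tsum_mul_left]
          gcongr
          exact tsum_ofReal_sub_succ_le hu fun j => by positivity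
      _ ≤ ENNReal.ofReal ((2 / 3) ^ (n + 1) / (h * (h + 1))) := by
          rw [← ENNReal.ofReal_mul (by positivity), pow_succ, mul_comm _ (2 / 3 : ℝ)]
          refine ENNReal.ofReal_le_ofReal ?_
          simpa [u] using div_mul_one_div_le (c := (2 / 3 : ℝ) ^ n) (by positivity) hh'

lemma volume_limsup_tailSet {i₀ : ℕ} (hi₀ : 1 ≤ i₀) :
    volume (limsup (fun n => tailSet i₀ n 1) atTop) = 0 := by
  refine measure_limsup_atTop_eq_zero (ne_top_of_le_ne_top ?_
    (ENNReal.tsum_le_tsum fun n => volume_tailSet_le hi₀ n 1 le_rfl))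
  rw [← ENNReal.ofReal_tsum_of_nonneg (fun n => by positivity)
    ((summable_geometric_of_lt_one (by norm_num) (by norm_num)).div_const _)]
  exact ENNReal.ofReal_ne_top

lemma ae_frequently_eq_of_tsum_eq_top {Ω β : Type*} [MeasurableSpace Ω] [MeasurableSpace β]
    [MeasurableSingletonClass β] {μ : Measure Ω} {X : ℕ → Ω → β} (hX : ∀ k, Measurable (X k))
    (hindep : iIndepFun X μ) {b : β} (hsum : ∑' k, μ (X k ⁻¹' {b}) = ⊤) :
    ∀ᵐ ω ∂μ, ∃ᶠ k in atTop, X k ω = b := by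
  have hmeas (k : ℕ) : MeasurableSet (X k ⁻¹' {b}) := hX k (measurableSet_singleton b)
  have hsets : iIndepSet (fun k => X k ⁻¹' {b}) μ := by
    rw [iIndepSet_iff_meas_biInter hmeas]
    exact fun S => hindep.measure_inter_preimage_eq_mul S fun _ _ => measurableSet_singleton b
  have := hsets.isProbabilityMeasure
  have hlimsup : ∀ᵐ ω ∂μ, ω ∈ limsup (fun k => X k ⁻¹' {b}) atTop := by
    rw [ae_mem_iff_measure_eq (MeasurableSet.measurableSet_limsup hmeas).nullMeasurableSet,
      measure_limsup_eq_one hmeas hsets hsum, measure_univ]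
  filter_upwards [hlimsup] with ω hω
  exact (mem_limsup_iff_frequently_mem (s := fun k => X k ⁻¹' {b})).1 hω

lemma map_mutuallySingular_of_ae_mem {Ω β : Type*} [MeasurableSpace Ω] [MeasurableSpace β]
    {μ : Measure Ω} {ν : Measure β} {f : Ω → β} {s : Set β} (hs : MeasurableSet s)
    (hf : ∀ᵐ ω ∂μ, f ω ∈ s) (hν : ν s = 0) : (μ.map f).MutuallySingular ν := by
  refine ⟨sᶜ, hs.compl, ?_, by rwa [compl_compl]⟩
  by_cases hm : AEMeasurable f μ
  · rw [Measure.map_apply_of_aemeasurable hm hs.compl]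
    exact hf
  · rw [Measure.map_of_not_aemeasurable hm, Measure.coe_zero, Pi.zero_apply]

theorem silvester_singular_of_divergent_sum_general
    (p : ℕ → Measure ℕ)
    (hp0 : ∀ k, p k {0} = 0)
    (P : Measure (ℕ → ℕ))
    (hlaw : ∀ k : ℕ, P.map (fun α => α k) = p k)
    (hindep : ProbabilityTheory.iIndepFun
      (fun k (α : ℕ → ℕ) => α k) P)
    (i₀ : ℕ) (hi₀ : 1 ≤ i₀) (hdiv : ∑' k : ℕ, p k {i₀} = ⊤) :
    (P.map PhiS).MutuallySingular volume := by
  have hcoord (k i : ℕ) : P ((fun α : ℕ → ℕ => α k) ⁻¹' {i}) = p k {i} := by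
    rw [← hlaw k, Measure.map_apply (measurable_pi_apply k) (measurableSet_singleton i)]
  have hpos : ∀ᵐ α ∂P, ∀ k, 1 ≤ α k := ae_all_iff.2 fun k => by
    rw [ae_iff, ← hp0 k, ← hcoord]
    congr 1
    ext α
    simp
  have hfreq : ∀ᵐ α ∂P, ∃ᶠ k in atTop, α k = i₀ :=
    ae_frequently_eq_of_tsum_eq_top measurable_pi_apply hindep (by simpa only [hcoord])
  refine map_mutuallySingular_of_ae_mem (.measurableSet_limsup (measurableSet_tailSet i₀ · 1))
    ?_ (volume_limsup_tailSet hi₀)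
  filter_upwards [hpos, hfreq] with α hα hk
  exact mem_limsup_iff_frequently_mem.2 (hk.mono fun n hn => PhiS_mem_tailSet hα hn)

/-- If the difference-Silvester symbols are independent with laws `p_k`
(probability measures on the positive integers, with joint law `P`) and there is a positive
integer `i₀` with `Σ_{k≥1} p_k({i₀}) = +∞`, then the distribution `μ_ξ = (Φ_S)_*P` is singular
with respect to Lebesgue measure. -/
theorem silvester_singular_of_divergent_sum
    (p : ℕ → Measure ℕ) [∀ k, IsProbabilityMeasure (p k)]
    (hp0 : ∀ k, p k {0} = 0)
    (P : Measure (ℕ → ℕ)) [IsProbabilityMeasure P]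
    (hlaw : ∀ k : ℕ, P.map (fun α => α k) = p k)
    (hindep : ProbabilityTheory.iIndepFun
      (fun k (α : ℕ → ℕ) => α k) P)
    (i₀ : ℕ) (hi₀ : 1 ≤ i₀) (hdiv : ∑' k : ℕ, p k {i₀} = ⊤) :
    (P.map PhiS).MutuallySingular volume :=
  silvester_singular_of_divergent_sum_general p hp0 P hlaw hindep i₀ hi₀ hdiv

end ROE
end

section
/- If the p_k are all equal to a fixed probability measure p on the positive integers (i.e. the difference-Silvester symbols are independent and identically distributed), then the probability measure μ_ξ is singular with respect to Lebesgue measure: μ_ξ ⊥ λ. -/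
open MeasureTheory Set

open Filter Pointwise ProbabilityTheory

theorem hasSum_inv_mul_add_one {a : ℝ} (ha : 0 < a) :
    HasSum (fun j : ℕ => ((a + j) * (a + j + 1))⁻¹) a⁻¹ := by
  have hterm : ∀ j : ℕ, ((a + j) * (a + j + 1))⁻¹ = (a + j)⁻¹ - (a + (j + 1 : ℕ))⁻¹ := by
    intro j
    push_cast
    field_simp
    ring
  rw [hasSum_iff_tendsto_nat_of_nonneg (fun j => by positivity)]
  simp_rw [hterm, Finset.sum_range_sub' (fun j : ℕ => (a + j)⁻¹)]
  have hinv : Tendsto (fun N : ℕ => (a + N)⁻¹) atTop (nhds 0) :=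
    tendsto_inv_atTop_zero.comp (tendsto_atTop_add_const_left _ _ tendsto_natCast_atTop_atTop)
  simpa using tendsto_const_nhds.sub hinv

namespace MeasureTheory

theorem measure_iUnion_le_ofReal_of_hasSum {α ι : Type*} [MeasurableSpace α] [Countable ι]
    {μ : Measure α} {s : ι → Set α} {f : ι → ℝ} {a : ℝ} (hf : HasSum f a) (hf0 : ∀ i, 0 ≤ f i)
    (hs : ∀ i, μ (s i) ≤ ENNReal.ofReal (f i)) : μ (⋃ i, s i) ≤ ENNReal.ofReal a :=
  calc μ (⋃ i, s i) ≤ ∑' i, μ (s i) := measure_iUnion_le s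
    _ ≤ ∑' i, ENNReal.ofReal (f i) := ENNReal.tsum_le_tsum hs
    _ = ENNReal.ofReal a := by rw [← ENNReal.ofReal_tsum_of_nonneg hf0 hf.summable, hf.tsum_eq]

theorem Measure.mutuallySingular_map_of_ae_mem {α β : Type*} [MeasurableSpace α]
    [MeasurableSpace β] {μ : Measure α} {ν : Measure β} {f : α → β} {N : Set β}
    (hf : AEMeasurable f μ) (hN : ν N = 0) (h : ∀ᵐ x ∂μ, f x ∈ N) : μ.map f ⟂ₘ ν := by
  refine ⟨(toMeasurable ν N)ᶜ, (measurableSet_toMeasurable ν N).compl, ?_,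
    by rwa [compl_compl, measure_toMeasurable]⟩
  rw [Measure.map_apply_of_aemeasurable hf (measurableSet_toMeasurable ν N).compl]
  exact measure_eq_zero_iff_ae_notMem.2 (h.mono fun x hx => not_not.2 (subset_toMeasurable ν N hx))

theorem Measure.exists_pos_measure_singleton_ne_zero {p : Measure ℕ} [NeZero p] (hp0 : p {0} = 0) :
    ∃ c, 0 < c ∧ p {c} ≠ 0 := by
  by_contra! h
  have hall : ∀ c, p {c} = 0 := fun c =>
    (Nat.eq_zero_or_pos c).elim (fun hc => hc ▸ hp0) (h c)
  exact NeZero.ne p (Measure.ext_iff_singleton.2 fun c => by simp [hall])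

end MeasureTheory

theorem ProbabilityTheory.iIndepFun.ae_frequently_mem {Ω β : Type*} {mΩ : MeasurableSpace Ω}
    {mβ : MeasurableSpace β} {μ : Measure Ω} {ν : Measure β} {X : ℕ → Ω → β}
    (hX : iIndepFun X μ) (hXm : ∀ k, Measurable (X k)) (hlaw : ∀ k, μ.map (X k) = ν)
    {s : Set β} (hs : MeasurableSet s) (hνs : ν s ≠ 0) :
    ∀ᵐ ω ∂μ, ∃ᶠ k in atTop, X k ω ∈ s := by
  have : IsProbabilityMeasure μ := hX.isProbabilityMeasure
  have hpre : ∀ k, MeasurableSet (X k ⁻¹' s) := fun k => hXm k hs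
  have hindep : iIndepSet (fun k => X k ⁻¹' s) μ :=
    (iIndepSet_iff_meas_biInter hpre).2 fun S => hX.meas_biInter fun k _ => ⟨s, hs, rfl⟩
  have hsum : ∑' k, μ (X k ⁻¹' s) = ⊤ := by
    simp_rw [← Measure.map_apply (hXm _) hs, hlaw]
    exact ENNReal.tsum_const_eq_top_of_ne_zero hνs
  have hlimsup : μ (limsup (fun k => X k ⁻¹' s) atTop)ᶜ = 0 :=
    (prob_compl_eq_zero_iff (MeasurableSet.measurableSet_limsup hpre)).2
      (measure_limsup_eq_one hpre hindep hsum)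
  filter_upwards [measure_eq_zero_iff_ae_notMem.1 hlimsup] with ω hω
  exact mem_limsup_iff_frequently_mem.1 (not_not.1 hω)

namespace ROE

theorem measurable_dSeq (h : ℕ → ℕ → ℕ) (n : ℕ) : Measurable fun α : ℕ → ℕ => dSeq h α n := by
  induction n with
  | zero => exact (measurable_of_countable fun a : ℕ => a + 1).comp (measurable_pi_apply 0)
  | succ n ih =>
    exact (measurable_of_countable fun q : ℕ × ℕ => h n q.1 + q.2).comp
      (ih.prodMk (measurable_pi_apply (n + 1)))

theorem measurable_Phi (a b h : ℕ → ℕ → ℕ) : Measurable (Phi a b h) := by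
  refine Measurable.tsum fun n => Measurable.mul ?_ ?_
  · exact Finset.measurable_prod _ fun i _ =>
      (measurable_of_countable fun d => (a i d : ℝ) / (b i d : ℝ)).comp (measurable_dSeq h i)
  · exact (measurable_of_countable fun d : ℕ => 1 / (d : ℝ)).comp (measurable_dSeq h n)

/-- The Silvester digits `d_k, d_{k+1}, …` continuing from `d_k = m` with difference digits
`α 0, α 1, …`; `silvesterSum m α` is the corresponding tail `Σ_{n ≥ k} 1/d_n`. -/
def silvesterDigits (m : ℕ) (α : ℕ → ℕ) : ℕ → ℕ
  | 0 => m
  | n + 1 => silvesterDigits m α n * (silvesterDigits m α n - 1) + α n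

noncomputable def silvesterSum (m : ℕ) (α : ℕ → ℕ) : ℝ :=
  ∑' n, (silvesterDigits m α n : ℝ)⁻¹

theorem silvesterDigits_succ' (m : ℕ) (α : ℕ → ℕ) (n : ℕ) :
    silvesterDigits m α (n + 1) =
      silvesterDigits (m * (m - 1) + α 0) (fun i => α (i + 1)) n := by
  induction n with
  | zero => rfl
  | succ n ih =>
    show _ * (_ - 1) + _ = _ * (_ - 1) + _
    rw [ih]

theorem dSeq_silvesterH (α : ℕ → ℕ) (n : ℕ) :
    dSeq silvesterH α n = silvesterDigits (α 0 + 1) (fun i => α (i + 1)) n := by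
  induction n with
  | zero => rfl
  | succ n ih => simp only [dSeq, silvesterDigits, silvesterH, ih]

theorem PhiS_eq_silvesterSum (α : ℕ → ℕ) :
    PhiS α = silvesterSum (α 0 + 1) (fun i => α (i + 1)) := by
  simp only [PhiS, Phi, silvesterSum, silvesterA, silvesterB, dSeq_silvesterH, Nat.cast_one,
    div_one, Finset.prod_const_one, one_mul, one_div]

section Bounds

variable {m : ℕ} {α : ℕ → ℕ}

theorem two_pow_lt_silvesterDigits (hm : 2 ≤ m) (hα : ∀ i, 0 < α i) (n : ℕ) :
    2 ^ n < silvesterDigits m α n := by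
  induction n with
  | zero => show 1 < m; omega
  | succ n ih =>
    obtain ⟨d, hd⟩ : ∃ d, silvesterDigits m α n = d + 1 :=
      ⟨_, (Nat.succ_pred_eq_of_pos (Nat.zero_lt_of_lt ih)).symm⟩
    rw [silvesterDigits, hd, Nat.add_sub_cancel, pow_succ]
    have := hα n
    have : 1 ≤ 2 ^ n := Nat.one_le_two_pow
    nlinarith

theorem two_le_silvesterDigits (hm : 2 ≤ m) (hα : ∀ i, 0 < α i) (n : ℕ) :
    2 ≤ silvesterDigits m α n := by
  have := two_pow_lt_silvesterDigits hm hα n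
  have := Nat.one_le_two_pow (n := n)
  omega

theorem summable_inv_silvesterDigits (hm : 2 ≤ m) (hα : ∀ i, 0 < α i) :
    Summable fun n => (silvesterDigits m α n : ℝ)⁻¹ := by
  refine summable_geometric_two.of_nonneg_of_le (fun n => by positivity) fun n => ?_
  rw [one_div, inv_pow]
  exact inv_anti₀ (by positivity) (by exact_mod_cast (two_pow_lt_silvesterDigits hm hα n).le)

theorem silvesterSum_eq_inv_add (hm : 2 ≤ m) (hα : ∀ i, 0 < α i) :
    silvesterSum m α = (m : ℝ)⁻¹ + silvesterSum (m * (m - 1) + α 0) (fun i => α (i + 1)) := by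
  rw [silvesterSum, (summable_inv_silvesterDigits hm hα).tsum_eq_zero_add]
  simp_rw [silvesterDigits_succ']
  rfl

theorem inv_silvesterDigits_le (hm : 2 ≤ m) (hα : ∀ i, 0 < α i) (n : ℕ) :
    (silvesterDigits m α n : ℝ)⁻¹ ≤
      ((silvesterDigits m α n : ℝ) - 1)⁻¹ - ((silvesterDigits m α (n + 1) : ℝ) - 1)⁻¹ := by
  have he := two_le_silvesterDigits hm hα n
  have heR : (2 : ℝ) ≤ silvesterDigits m α n := by exact_mod_cast he
  have hnext : (silvesterDigits m α n : ℝ) * (silvesterDigits m α n - 1) ≤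
      (silvesterDigits m α (n + 1) : ℝ) - 1 := by
    have : (1 : ℝ) ≤ α n := by exact_mod_cast hα n
    rw [silvesterDigits]
    push_cast [Nat.cast_sub (by omega : 1 ≤ silvesterDigits m α n)]
    linarith
  calc (silvesterDigits m α n : ℝ)⁻¹
      = ((silvesterDigits m α n : ℝ) - 1)⁻¹ -
          ((silvesterDigits m α n : ℝ) * (silvesterDigits m α n - 1))⁻¹ := by
        have h1 : (silvesterDigits m α n : ℝ) - 1 ≠ 0 := by linarith
        have h0 : (silvesterDigits m α n : ℝ) ≠ 0 := by linarith
        field_simp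
    _ ≤ _ := by gcongr; nlinarith

theorem silvesterSum_le (hm : 2 ≤ m) (hα : ∀ i, 0 < α i) :
    silvesterSum m α ≤ ((m : ℝ) - 1)⁻¹ := by
  refine (summable_inv_silvesterDigits hm hα).tsum_le_of_sum_range_le fun N => ?_
  set f : ℕ → ℝ := fun n => ((silvesterDigits m α n : ℝ) - 1)⁻¹
  have hfN : 0 ≤ f N := by
    have : (2 : ℝ) ≤ silvesterDigits m α N := by exact_mod_cast two_le_silvesterDigits hm hα N
    exact inv_nonneg.2 (by linarith)
  calc ∑ n ∈ Finset.range N, (silvesterDigits m α n : ℝ)⁻¹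
      ≤ ∑ n ∈ Finset.range N, (f n - f (n + 1)) :=
        Finset.sum_le_sum fun n _ => inv_silvesterDigits_le hm hα n
    _ = f 0 - f N := Finset.sum_range_sub' f N
    _ ≤ f 0 := sub_le_self _ hfN

theorem inv_le_silvesterSum (hm : 2 ≤ m) (hα : ∀ i, 0 < α i) :
    (m : ℝ)⁻¹ ≤ silvesterSum m α :=
  (summable_inv_silvesterDigits hm hα).le_tsum 0 fun _ _ => by positivity

theorem two_le_mul_sub_one (hm : 2 ≤ m) : 2 ≤ m * (m - 1) :=
  Nat.mul_le_mul hm (by omega : 1 ≤ m - 1)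

def silvesterSumsWith (m k c : ℕ) : Set ℝ :=
  silvesterSum m '' {α | (∀ i, 0 < α i) ∧ α k = c}

theorem silvesterSumsWith_zero_subset (hm : 2 ≤ m) (c : ℕ) :
    silvesterSumsWith m 0 c ⊆
      (m : ℝ)⁻¹ +ᵥ Icc ((m * (m - 1) + c : ℕ) : ℝ)⁻¹ (((m * (m - 1) + c : ℕ) : ℝ) - 1)⁻¹ := by
  rintro _ ⟨α, ⟨hα, rfl⟩, rfl⟩
  have hα' : ∀ i, 0 < α (i + 1) := fun i => hα (i + 1)
  have hM : 2 ≤ m * (m - 1) + α 0 := two_le_silvesterDigits hm hα 1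
  rw [silvesterSum_eq_inv_add hm hα]
  exact vadd_mem_vadd_set ⟨inv_le_silvesterSum hM hα', silvesterSum_le hM hα'⟩

theorem silvesterSumsWith_succ_subset (hm : 2 ≤ m) (k c : ℕ) :
    silvesterSumsWith m (k + 1) c ⊆
      ⋃ j : ℕ, (m : ℝ)⁻¹ +ᵥ silvesterSumsWith (m * (m - 1) + (j + 1)) k c := by
  rintro _ ⟨α, ⟨hα, hk⟩, rfl⟩
  refine mem_iUnion.2 ⟨α 0 - 1, ?_⟩
  rw [Nat.sub_add_cancel (hα 0), silvesterSum_eq_inv_add hm hα]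
  exact vadd_mem_vadd_set ⟨_, ⟨fun i => hα (i + 1), hk⟩, rfl⟩

theorem volume_silvesterSumsWith_le {c : ℕ} (hc : 0 < c) (k : ℕ) (hm : 2 ≤ m) :
    volume (silvesterSumsWith m k c) ≤
      ENNReal.ofReal (2⁻¹ ^ k * ((m * (m - 1) : ℕ) : ℝ)⁻¹ ^ 2) := by
  induction k generalizing m with
  | zero =>
    refine (measure_mono (silvesterSumsWith_zero_subset hm c)).trans ?_
    rw [measure_vadd, Real.volume_Icc, pow_zero, one_mul, Nat.cast_add]
    refine ENNReal.ofReal_le_ofReal ?_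
    have hh : (2 : ℝ) ≤ (m * (m - 1) : ℕ) := by exact_mod_cast two_le_mul_sub_one hm
    set h : ℝ := ((m * (m - 1) : ℕ) : ℝ)
    have hcR : (1 : ℝ) ≤ c := by exact_mod_cast hc
    calc (h + c - 1)⁻¹ - (h + c)⁻¹ = ((h + c - 1) * (h + c))⁻¹ := by
          have : h + c - 1 ≠ 0 := by linarith
          field_simp
          ring
      _ ≤ (h * h)⁻¹ := by gcongr <;> linarith
      _ = h⁻¹ ^ 2 := by ring
  | succ k ih =>
    have hh := two_le_mul_sub_one hm
    have hhR : (2 : ℝ) ≤ (m * (m - 1) : ℕ) := by exact_mod_cast hh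
    have hsum := (hasSum_inv_mul_add_one (a := ((m * (m - 1) : ℕ) : ℝ)) (by positivity)).mul_left
      (2⁻¹ ^ k * (((m * (m - 1) : ℕ) : ℝ) * ((m * (m - 1) : ℕ) + 1))⁻¹)
    refine (measure_mono (silvesterSumsWith_succ_subset hm k c)).trans <|
      (measure_iUnion_le_ofReal_of_hasSum hsum (fun j => by positivity) fun j => ?_).trans ?_
    · rw [measure_vadd]
      refine (ih (by omega)).trans (ENNReal.ofReal_le_ofReal ?_)
      have hx : ((((m * (m - 1) + (j + 1)) * (m * (m - 1) + (j + 1) - 1)) : ℕ) : ℝ) =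
          ((m * (m - 1) : ℕ) + j) * ((m * (m - 1) : ℕ) + j + 1) := by
        rw [show m * (m - 1) + (j + 1) - 1 = m * (m - 1) + j by omega]
        push_cast
        ring
      rw [hx, mul_assoc, sq]
      gcongr <;> exact le_add_of_nonneg_right j.cast_nonneg
    · refine ENNReal.ofReal_le_ofReal ?_
      set h : ℝ := ((m * (m - 1) : ℕ) : ℝ)
      calc 2⁻¹ ^ k * (h * (h + 1))⁻¹ * h⁻¹ = 2⁻¹ ^ k * h⁻¹ ^ 2 * (h + 1)⁻¹ := by
            rw [mul_inv]
            ring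
        _ ≤ 2⁻¹ ^ k * h⁻¹ ^ 2 * 2⁻¹ := by gcongr; linarith
        _ = 2⁻¹ ^ (k + 1) * h⁻¹ ^ 2 := by ring

end Bounds

theorem image_PhiS_subset (n c : ℕ) :
    PhiS '' {α | (∀ i, 0 < α i) ∧ α (n + 1) = c} ⊆ ⋃ j : ℕ, silvesterSumsWith (j + 2) n c := by
  rintro _ ⟨α, ⟨hα, hn⟩, rfl⟩
  refine mem_iUnion.2 ⟨α 0 - 1, ?_⟩
  rw [PhiS_eq_silvesterSum, show α 0 - 1 + 2 = α 0 + 1 by have := hα 0; omega]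
  exact ⟨_, ⟨fun i => hα (i + 1), hn⟩, rfl⟩

theorem volume_image_PhiS_le {c : ℕ} (hc : 0 < c) (n : ℕ) :
    volume (PhiS '' {α | (∀ i, 0 < α i) ∧ α (n + 1) = c}) ≤ ENNReal.ofReal (2⁻¹ ^ n) := by
  have hsum := (hasSum_inv_mul_add_one one_pos).mul_left ((2 : ℝ)⁻¹ ^ n)
  rw [inv_one, mul_one] at hsum
  refine (measure_mono (image_PhiS_subset n c)).trans
    (measure_iUnion_le_ofReal_of_hasSum hsum (fun j => by positivity) fun j => ?_)
  refine (volume_silvesterSumsWith_le hc n (by omega)).trans (ENNReal.ofReal_le_ofReal ?_)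
  have hx : ((((j + 2) * (j + 2 - 1) : ℕ)) : ℝ) = (1 + j) * (1 + j + 1) := by
    rw [show j + 2 - 1 = j + 1 by omega]
    push_cast
    ring
  rw [hx]
  gcongr
  exact pow_le_of_le_one (by positivity) (inv_le_one_of_one_le₀ (by nlinarith)) two_ne_zero

theorem volume_setOf_frequently_mem_image_PhiS {c : ℕ} (hc : 0 < c) :
    volume {x | ∃ᶠ n in atTop, x ∈ PhiS '' {α | (∀ i, 0 < α i) ∧ α (n + 1) = c}} = 0 := by
  refine measure_setOfPred_frequently_eq_zero (ne_top_of_le_ne_top ?_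
    (ENNReal.tsum_le_tsum (volume_image_PhiS_le hc)))
  rw [← ENNReal.ofReal_tsum_of_nonneg (fun n => by positivity)
    (summable_geometric_of_lt_one (by norm_num) (by norm_num))]
  exact ENNReal.ofReal_ne_top

/-- If the difference-Silvester symbols are independent and identically
distributed, with common law a fixed probability measure `p` on the positive integers, then the
distribution `μ_ξ = (Φ_S)_*P` is singular with respect to Lebesgue measure. -/
theorem silvester_singular_of_iid
    (p : Measure ℕ) [IsProbabilityMeasure p] (hp0 : p {0} = 0)
    (P : Measure (ℕ → ℕ)) [IsProbabilityMeasure P]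
    (hlaw : ∀ k : ℕ, P.map (fun α => α k) = p)
    (hindep : ProbabilityTheory.iIndepFun
      (fun k (α : ℕ → ℕ) => α k) P) :
    (P.map PhiS).MutuallySingular volume := by
  obtain ⟨c, hc, hpc⟩ := Measure.exists_pos_measure_singleton_ne_zero hp0
  have hpos : ∀ᵐ α ∂P, ∀ k, 0 < α k := ae_all_iff.2 fun k => by
    have hk : ∀ᵐ n ∂P.map (fun α => α k), n ≠ 0 := by
      rw [hlaw k]
      exact measure_eq_zero_iff_ae_notMem.1 hp0
    exact (ae_of_ae_map (measurable_pi_apply k).aemeasurable hk).mono fun _ => Nat.pos_of_ne_zero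
  have hfreq : ∀ᵐ α ∂P, ∃ᶠ k in atTop, α k ∈ ({c} : Set ℕ) :=
    hindep.ae_frequently_mem measurable_pi_apply hlaw (measurableSet_singleton c) hpc
  refine Measure.mutuallySingular_map_of_ae_mem (measurable_Phi _ _ _).aemeasurable
    (volume_setOf_frequently_mem_image_PhiS hc) ?_
  filter_upwards [hpos, hfreq] with α hα hαc
  rw [← map_add_atTop_eq_nat 1, frequently_map] at hαc
  exact hαc.mono fun n hn => ⟨α, ⟨hα, hn⟩, rfl⟩

end ROE
end

section
/- Consider the restricted Oppenheim expansion with a_n(j) = j and b_n(j) = 1 for all n (so h_n(j) = j²(j−1)): x_1 = x, d_n = ⌊1/x_n⌋ + 1, x_{n+1} = (1/d_n)·(x_n − 1/d_n), with difference digits α_1(x) = d_1(x) − 1 and α_{k+1}(x) = d_{k+1}(x) − d_k(x)²(d_k(x) − 1). Then for λ-almost every x ∈ (0,1), every positive integer i occurs only finitely many times among the digits α_k(x). -/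
/-!
Let `E_k(H)` be the set of points whose `(k+1)`-st digit is `h(d_k) + i`, where the digit
before the first one is given `h`-value `H`. On the first-digit cylinder `d_1 = j > H` the map
`x ↦ x_2 = (x - 1/j)/j` is affine with slope `1/j` and `x_2 ∈ E_{k-1}(h(j))`, so
`λ(E_k(H)) ≤ ∑_{j>H} j · λ(E_{k-1}(h(j)))`. Since `j / h(j) = 1/((j-1) j)` telescopes and
`h(j) + 1 ≥ (H+1)^2`, induction gives `λ(E_k(H)) ≤ 1 / (H (H+1)^(k+1))`. For `H = 1` this is
`2^-(k+1)`, summable in `k`, so by Borel–Cantelli almost every `x` has `α_k(x) = i` for only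
finitely many `k`; then take the union over the countably many `i`.
-/

open MeasureTheory Set

namespace ROE

/-- The ROE with `a_n(j) = j` and `b_n(j) = 1`, for which `h_n(j) = j²(j-1)` and the algorithm
reads `x_{n+1} = (1/d_n)·(x_n - 1/d_n)`. -/
def sqA : ℕ → ℕ → ℕ := fun _ j => j

def sqB : ℕ → ℕ → ℕ := fun _ _ => 1

def sqH : ℕ → ℕ → ℕ := fun _ j => j ^ 2 * (j - 1)

open scoped ENNReal

theorem X_succ_eq_X_shift (a b : ℕ → ℕ → ℕ) (x : ℝ) (k : ℕ) :
    X a b x (k + 1) = X (fun n => a (n + 1)) (fun n => b (n + 1)) (X a b x 1) k := by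
  induction k with
  | zero => rfl
  | succ k ih => rw [X, ih]; rfl

theorem D_succ_eq_D_shift (a b : ℕ → ℕ → ℕ) (x : ℝ) (k : ℕ) :
    D a b x (k + 1) = D (fun n => a (n + 1)) (fun n => b (n + 1)) (X a b x 1) k := by
  rw [D, D, X_succ_eq_X_shift]

theorem InfiniteROE.shift {a b : ℕ → ℕ → ℕ} {x : ℝ} (hx : InfiniteROE a b x) :
    InfiniteROE (fun n => a (n + 1)) (fun n => b (n + 1)) (X a b x 1) := fun k => by
  rw [← X_succ_eq_X_shift]; exact hx (k + 1)

theorem one_div_mem_Ico_D_zero (a b : ℕ → ℕ → ℕ) {x : ℝ} (hx : 0 < x) :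
    1 / x ∈ Ico ((D a b x 0 : ℝ) - 1) (D a b x 0) := by
  have hD : (D a b x 0 : ℝ) = ⌊1 / x⌋ + 1 := by
    rw [D, X, Nat.cast_add, Nat.cast_one, ← Int.cast_natCast,
      Int.toNat_of_nonneg (Int.floor_nonneg.2 (by positivity))]
  rw [hD, add_sub_cancel_right]
  exact ⟨Int.floor_le _, Int.lt_floor_add_one _⟩

theorem two_le_D_zero (a b : ℕ → ℕ → ℕ) {x : ℝ} (hx : x ∈ Ioo 0 1) :
    2 ≤ D a b x 0 := by
  have h := (one_div_mem_Ico_D_zero a b hx.1).2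
  have : (1 : ℝ) < 1 / x := by rw [lt_div_iff₀ hx.1]; linarith [hx.2]
  exact_mod_cast (show (1 : ℝ) < D a b x 0 by linarith)

theorem mem_Ioc_D_zero (a b : ℕ → ℕ → ℕ) {x : ℝ} (hx : x ∈ Ioo 0 1) :
    x ∈ Ioc (1 / (D a b x 0 : ℝ)) (1 / ((D a b x 0 : ℝ) - 1)) := by
  obtain ⟨hle, hlt⟩ := one_div_mem_Ico_D_zero a b hx.1
  have h2 : (2 : ℝ) ≤ D a b x 0 := by exact_mod_cast two_le_D_zero a b hx
  constructor
  · rw [div_lt_iff₀ (by linarith)]; rw [div_lt_iff₀ hx.1] at hlt; linarith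
  · rw [le_div_iff₀ (by linarith)]; rw [le_div_iff₀ hx.1] at hle; linarith

theorem D_succ_sq (x : ℝ) (k : ℕ) : D sqA sqB x (k + 1) = D sqA sqB (X sqA sqB x 1) k :=
  D_succ_eq_D_shift sqA sqB x k

theorem InfiniteROE.shift_sq {x : ℝ} (hx : InfiniteROE sqA sqB x) :
    InfiniteROE sqA sqB (X sqA sqB x 1) :=
  hx.shift

noncomputable def digitMap (j : ℕ) (x : ℝ) : ℝ := (x - 1 / j) / j

theorem X_one_sq (x : ℝ) : X sqA sqB x 1 = digitMap (D sqA sqB x 0) x := by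
  simp only [X, D, digitMap, sqA, sqB, Nat.cast_one]
  ring

theorem X_one_le_one_div {x : ℝ} (hx : x ∈ Ioo 0 1) :
    X sqA sqB x 1 ≤ 1 / ((D sqA sqB x 0 : ℝ) ^ 2 * ((D sqA sqB x 0 : ℝ) - 1)) := by
  have hmem := (mem_Ioc_D_zero sqA sqB hx).2
  have h2 : (2 : ℝ) ≤ D sqA sqB x 0 := by exact_mod_cast two_le_D_zero sqA sqB hx
  set d : ℝ := (D sqA sqB x 0 : ℝ)
  rw [X_one_sq, digitMap]
  calc (x - 1 / d) / d ≤ (1 / (d - 1) - 1 / d) / d := by gcongr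
    _ = 1 / (d ^ 2 * (d - 1)) := by
      have : d - 1 ≠ 0 := by linarith
      field_simp; ring

theorem sqH_lt_D_one {x : ℝ} (hx : x ∈ Ioo 0 1) (hx1 : 0 < X sqA sqB x 1) :
    sqH 0 (D sqA sqB x 0) < D sqA sqB x 1 := by
  have h2 := two_le_D_zero sqA sqB hx
  have hd : (2 : ℝ) ≤ D sqA sqB x 0 := by exact_mod_cast h2
  have hle := X_one_le_one_div hx
  have hlt := (one_div_mem_Ico_D_zero sqA sqB hx1).2
  rw [D_succ_sq]
  have hH : ((sqH 0 (D sqA sqB x 0) : ℕ) : ℝ) =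
      (D sqA sqB x 0 : ℝ) ^ 2 * ((D sqA sqB x 0 : ℝ) - 1) := by
    simp [sqH, Nat.cast_sub (by omega : 1 ≤ D sqA sqB x 0)]
  have : ((sqH 0 (D sqA sqB x 0) : ℕ) : ℝ) ≤ 1 / X sqA sqB x 1 := by
    rw [hH, le_div_iff₀ hx1]; rw [le_div_iff₀ (by nlinarith)] at hle; linarith
  exact_mod_cast this.trans_lt hlt

/-- A cover of the set `E_k(H)` of the header (on the infinite expansions); branch `m` has first
digit `H + m + 1`, and `H = 1` covers `α_{k+1} = i`. -/
noncomputable def hitSet (i : ℕ) : ℕ → ℕ → Set ℝ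
  | 0, H => Ioc (1 / ((H : ℝ) + i)) (1 / ((H : ℝ) + i - 1))
  | k + 1, H => ⋃ m : ℕ, digitMap (H + m + 1) ⁻¹' hitSet i k (sqH 0 (H + m + 1))

theorem mem_hitSet_zero {i H : ℕ} {y : ℝ} (hy : y ∈ Ioo 0 1) (hD : D sqA sqB y 0 = H + i) :
    y ∈ hitSet i 0 H := by
  have h := mem_Ioc_D_zero sqA sqB hy
  rw [hD, Nat.cast_add] at h
  exact h

theorem mem_hitSet_succ_of_mem {i k H : ℕ} {y : ℝ} (hH : H < D sqA sqB y 0)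
    (hy : X sqA sqB y 1 ∈ hitSet i k (sqH 0 (D sqA sqB y 0))) : y ∈ hitSet i (k + 1) H := by
  obtain ⟨m, hm⟩ : ∃ m, D sqA sqB y 0 = H + m + 1 := ⟨D sqA sqB y 0 - H - 1, by omega⟩
  simp only [hitSet, mem_iUnion, mem_preimage]
  exact ⟨m, by rwa [← hm, ← X_one_sq]⟩

theorem mem_hitSet_succ {i : ℕ} (k : ℕ) {H : ℕ} {y : ℝ} (hy : InfiniteROE sqA sqB y)
    (hH : H < D sqA sqB y 0) (hD : D sqA sqB y (k + 1) = sqH k (D sqA sqB y k) + i) :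
    y ∈ hitSet i (k + 1) H := by
  refine mem_hitSet_succ_of_mem hH ?_
  cases k with
  | zero => exact mem_hitSet_zero (hy 1) (by rwa [← D_succ_sq])
  | succ k =>
    have hlt := sqH_lt_D_one (hy 0) (hy 1).1
    rw [D_succ_sq] at hlt
    exact mem_hitSet_succ k hy.shift_sq hlt (by rwa [← D_succ_sq, ← D_succ_sq])

theorem mem_hitSet_of_alpha_eq {x : ℝ} (hx : InfiniteROE sqA sqB x) {i k : ℕ} (hi : 1 ≤ i)
    (hα : alpha sqA sqB sqH x k = i) : x ∈ hitSet i k 1 := by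
  have h2 := two_le_D_zero sqA sqB (x := x) (hx 0)
  cases k with
  | zero => exact mem_hitSet_zero (hx 0) (by rw [alpha] at hα; omega)
  | succ k => exact mem_hitSet_succ k hx (by omega) (by rw [alpha] at hα; omega)

theorem volume_preimage_digitMap {j : ℕ} (hj : j ≠ 0) (s : Set ℝ) :
    volume (digitMap j ⁻¹' s) = j * volume s := by
  have hj' : (j : ℝ)⁻¹ ≠ 0 := by positivity
  have : digitMap j ⁻¹' s = (· + -(1 / j : ℝ)) ⁻¹' ((· * (j : ℝ)⁻¹) ⁻¹' s) := by
    ext x; simp [digitMap, div_eq_mul_inv, sub_eq_add_neg]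
  rw [this, measure_preimage_add_right, Real.volume_preimage_mul_right hj', inv_inv,
    abs_of_nonneg (Nat.cast_nonneg j), ENNReal.ofReal_natCast]

theorem hasSum_one_div_mul_add_one {a : ℝ} (ha : 0 < a) :
    HasSum (fun m : ℕ => 1 / ((a + m) * (a + m + 1))) (1 / a) := by
  have hterm (m : ℕ) : 1 / ((a + m) * (a + m + 1)) = 1 / (a + m) - 1 / (a + (m + 1 : ℕ)) := by
    have : 0 < a + m := by positivity
    push_cast; field_simp; ring
  refine (hasSum_iff_tendsto_nat_of_nonneg (fun m => by positivity) _).2 ?_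
  simp only [hterm, Finset.sum_range_sub', Nat.cast_zero, add_zero]
  have hlim : Filter.Tendsto (fun n : ℕ => 1 / (a + n)) Filter.atTop (nhds 0) := by
    simpa only [one_div, Function.comp_def] using tendsto_inv_atTop_zero.comp
      (Filter.tendsto_atTop_add_const_left _ a tendsto_natCast_atTop_atTop)
  simpa using hlim.const_sub (1 / a)

theorem volume_hitSet_zero_le {i H : ℕ} (hi : 1 ≤ i) (hH : 1 ≤ H) :
    volume (hitSet i 0 H) ≤ ENNReal.ofReal (1 / ((H : ℝ) * (H + 1))) := by
  have hH' : (1 : ℝ) ≤ H := by exact_mod_cast hH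
  have hi' : (1 : ℝ) ≤ i := by exact_mod_cast hi
  rw [hitSet, Real.volume_Ioc]
  refine ENNReal.ofReal_le_ofReal ?_
  have : 1 / ((H : ℝ) + i - 1) - 1 / (H + i) = 1 / ((H + i - 1) * (H + i)) := by
    have : (H : ℝ) + i - 1 ≠ 0 := by linarith
    have : (H : ℝ) + i ≠ 0 := by linarith
    field_simp; ring
  rw [this]
  gcongr <;> nlinarith

/-- Here `t + 1 = j > H` is a first digit and `(t + 1) ^ 2 * t = h(j)`. -/
theorem mul_one_div_sqH_le {H t : ℝ} (hH : 1 ≤ H) (ht : H ≤ t) (k : ℕ) :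
    (t + 1) * (1 / ((t + 1) ^ 2 * t * ((t + 1) ^ 2 * t + 1) ^ (k + 1))) ≤
      1 / (t * (t + 1)) * (1 / (H + 1) ^ (k + 2)) := by
  have hpow : (H + 1) ^ (k + 2) ≤ ((t + 1) ^ 2 * t + 1) ^ (k + 1) :=
    calc (H + 1) ^ (k + 2) ≤ (H + 1) ^ (2 * (k + 1)) :=
          pow_le_pow_right₀ (by linarith) (by omega)
      _ = ((H + 1) ^ 2) ^ (k + 1) := pow_mul _ _ _
      _ ≤ ((t + 1) ^ 2 * t + 1) ^ (k + 1) := by gcongr; nlinarith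
  have ht0 : 0 < t := by linarith
  calc (t + 1) * (1 / ((t + 1) ^ 2 * t * ((t + 1) ^ 2 * t + 1) ^ (k + 1)))
      = 1 / (t * (t + 1)) * (1 / ((t + 1) ^ 2 * t + 1) ^ (k + 1)) := by field_simp
    _ ≤ 1 / (t * (t + 1)) * (1 / (H + 1) ^ (k + 2)) := by gcongr

theorem volume_hitSet_le {i : ℕ} (hi : 1 ≤ i) (k : ℕ) {H : ℕ} (hH : 1 ≤ H) :
    volume (hitSet i k H) ≤ ENNReal.ofReal (1 / ((H : ℝ) * (H + 1) ^ (k + 1))) := by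
  induction k generalizing H with
  | zero => simpa using volume_hitSet_zero_le hi hH
  | succ k ih =>
    have hH' : (1 : ℝ) ≤ H := by exact_mod_cast hH
    have hsum := (hasSum_one_div_mul_add_one (by linarith : (0 : ℝ) < H)).mul_right
      (1 / ((H : ℝ) + 1) ^ (k + 2))
    have hbranch (m : ℕ) :
        ((H + m + 1 : ℕ) : ℝ≥0∞) * volume (hitSet i k (sqH 0 (H + m + 1))) ≤
          ENNReal.ofReal (1 / ((H + m) * (H + m + 1)) * (1 / ((H : ℝ) + 1) ^ (k + 2))) := by
      have hh : ((sqH 0 (H + m + 1) : ℕ) : ℝ) = ((H : ℝ) + m + 1) ^ 2 * (H + m) := by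
        simp [sqH]
      have hbound := ih (H := sqH 0 (H + m + 1))
        (by simp only [sqH, Nat.add_sub_cancel]; exact Nat.mul_pos (by positivity) (by omega))
      rw [hh] at hbound
      rw [← ENNReal.ofReal_natCast]
      push_cast
      calc ENNReal.ofReal ((H : ℝ) + m + 1) * volume (hitSet i k (sqH 0 (H + m + 1)))
          ≤ ENNReal.ofReal ((H : ℝ) + m + 1) *
              ENNReal.ofReal (1 / (((H : ℝ) + m + 1) ^ 2 * (H + m) *
                (((H : ℝ) + m + 1) ^ 2 * (H + m) + 1) ^ (k + 1))) := by gcongr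
        _ ≤ _ := by
            rw [← ENNReal.ofReal_mul (by positivity)]
            refine ENNReal.ofReal_le_ofReal ?_
            simpa only [add_assoc] using
              mul_one_div_sqH_le hH' (le_add_of_nonneg_right (Nat.cast_nonneg m)) k
    calc volume (hitSet i (k + 1) H)
        ≤ ∑' m : ℕ, volume (digitMap (H + m + 1) ⁻¹' hitSet i k (sqH 0 (H + m + 1))) :=
          measure_iUnion_le _
      _ = ∑' m : ℕ,
            ((H + m + 1 : ℕ) : ℝ≥0∞) * volume (hitSet i k (sqH 0 (H + m + 1))) := by
          simp only [volume_preimage_digitMap (Nat.succ_ne_zero _)]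
      _ ≤ ∑' m : ℕ,
            ENNReal.ofReal (1 / ((H + m) * (H + m + 1)) * (1 / ((H : ℝ) + 1) ^ (k + 2))) :=
          ENNReal.tsum_le_tsum hbranch
      _ = ENNReal.ofReal (1 / ((H : ℝ) * (H + 1) ^ (k + 1 + 1))) := by
          rw [← ENNReal.ofReal_tsum_of_nonneg (fun m => by positivity) hsum.summable,
            hsum.tsum_eq]
          congr 1
          field_simp

theorem ae_eventually_notMem_hitSet {i : ℕ} (hi : 1 ≤ i) :
    ∀ᵐ x, ∀ᶠ k in Filter.atTop, x ∉ hitSet i k 1 := by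
  have hgeom : Summable fun k : ℕ => 1 / (((1 : ℕ) : ℝ) * ((1 : ℕ) + 1) ^ (k + 1)) := by
    simpa [one_div_pow, one_add_one_eq_two] using
      (summable_nat_add_iff 1).2 summable_geometric_two
  refine ae_eventually_notMem (ne_top_of_le_ne_top ?_
    (ENNReal.tsum_le_tsum fun k => volume_hitSet_le hi k le_rfl))
  rw [← ENNReal.ofReal_tsum_of_nonneg (fun k => by positivity) hgeom]
  exact ENNReal.ofReal_ne_top

/-- For the restricted Oppenheim expansion with `a_n(j) = j`, `b_n(j) = 1`
(difference digits `α₁ = d₁ - 1`, `α_{k+1} = d_{k+1} - d_k²(d_k - 1)`), for `λ`-almost every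
`x ∈ (0,1)`, every positive integer `i` occurs only finitely many times among the digits
`α_k(x)`. -/
theorem sq_ae_finitely_many_occurrences :
    ∀ᵐ x ∂(volume.restrict (Set.Ioo (0 : ℝ) 1)),
      InfiniteROE sqA sqB x →
        ∀ i : ℕ, 1 ≤ i → {k : ℕ | alpha sqA sqB sqH x k = i}.Finite := by
  have hall : ∀ᵐ x, ∀ i ∈ Ici 1, ∀ᶠ k in Filter.atTop, x ∉ hitSet i k 1 :=
    (ae_ball_iff (to_countable _)).2 fun _ hi => ae_eventually_notMem_hitSet hi
  filter_upwards [ae_restrict_of_ae hall] with x hx hinf i hi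
  have hfin := Filter.eventually_cofinite.1 (Nat.cofinite_eq_atTop ▸ hx i hi)
  exact hfin.subset fun k hk => not_not.2 (mem_hitSet_of_alpha_eq hinf hi hk)

end ROE
end
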